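/- arXiv:2402.13982 — 4 statements merged into one kernel-verified Lean document; each statement's English description precedes it below -/
import Mathlib

section
/- For any commutative ring D, if z1, z2, z3 are off-diagonal 2×2 matrices over D (matrices with zero diagonal entries), then z1·z2·z3 = z3·z2·z1. -/
/-! Writing an off-diagonal matrix as `!![0, b; c, 0]`, a product of three of them is
`!![0, b₁ c₂ b₃; c₁ b₂ c₃, 0]`, and both entries are unchanged when the order of the
factors is reversed because the entries commute. -/

namespace Matrix

variable {R : Type*}

theorem exists_eq_offDiag_of_diag_eq_zero [Zero R] {A : Matrix (Fin 2) (Fin 2) R}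
    (h : A 0 0 = 0 ∧ A 1 1 = 0) : ∃ b c, A = !![0, b; c, 0] :=
  ⟨A 0 1, A 1 0, (eta_fin_two A).trans (by rw [h.1, h.2])⟩

variable [NonUnitalNonAssocSemiring R]

theorem offDiag_mul_offDiag (b₁ c₁ b₂ c₂ : R) :
    !![0, b₁; c₁, 0] * !![0, b₂; c₂, 0] = !![b₁ * c₂, 0; 0, c₁ * b₂] := by
  simp

theorem diagonal_mul_offDiag (a d b c : R) :
    !![a, 0; 0, d] * !![0, b; c, 0] = !![0, a * b; d * c, 0] := by
  simp

theorem offDiag_mul_offDiag_mul_offDiag (b₁ c₁ b₂ c₂ b₃ c₃ : R) :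
    !![0, b₁; c₁, 0] * !![0, b₂; c₂, 0] * !![0, b₃; c₃, 0] =
      !![0, b₁ * c₂ * b₃; c₁ * b₂ * c₃, 0] := by
  rw [offDiag_mul_offDiag, diagonal_mul_offDiag]

end Matrix

theorem offdiag_triple_reverse (D : Type*) [CommRing D]
    (z₁ z₂ z₃ : Matrix (Fin 2) (Fin 2) D)
    (h₁ : z₁ 0 0 = 0 ∧ z₁ 1 1 = 0) (h₂ : z₂ 0 0 = 0 ∧ z₂ 1 1 = 0)
    (h₃ : z₃ 0 0 = 0 ∧ z₃ 1 1 = 0) :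
    z₁ * z₂ * z₃ = z₃ * z₂ * z₁ := by
  obtain ⟨b₁, c₁, rfl⟩ := Matrix.exists_eq_offDiag_of_diag_eq_zero h₁
  obtain ⟨b₂, c₂, rfl⟩ := Matrix.exists_eq_offDiag_of_diag_eq_zero h₂
  obtain ⟨b₃, c₃, rfl⟩ := Matrix.exists_eq_offDiag_of_diag_eq_zero h₃
  have reverse : ∀ x y w : D, x * y * w = w * y * x := fun _ _ _ => by ring
  rw [Matrix.offDiag_mul_offDiag_mul_offDiag, Matrix.offDiag_mul_offDiag_mul_offDiag,
    reverse b₁, reverse c₁]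
end

section
/- Let A = D[β_i, γ_i : i ∈ ℕ] over an integral domain D and Z_i = β_i e_{12} + γ_i e_{21} the generic off-diagonal matrices. The products Z_{i_1} Z_{j_1} ⋯ Z_{i_n} Ẑ_{j_n} with i_1 ≤ ⋯ ≤ i_n and j_1 ≤ ⋯ ≤ j_{n or n-1} (the last factor possibly missing), for distinct such index data, are D-linearly independent in M_2(A). -/
/-!
Multiply a word `Z_{k₁} ⋯ Z_{k_m}` in the off-diagonal matrices `Z_k = !![0, β_k; γ_k, 0]`
by the all-ones vector: the top entry is `β_{k₁} γ_{k₂} β_{k₃} ⋯`, since each factor swaps the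
two coordinates. For the interleaved word of `(i, j)` this is the monomial `∏ β_i ∏ γ_j`, whose
exponent records the multisets of `i` and `j`, hence the sorted lists themselves. So the top
entries are distinct monomials, hence linearly independent.
-/

open MvPolynomial

/-- Interleave two lists: `interleave [i₁,…] [j₁,…] = [i₁, j₁, i₂, j₂, …]`. -/
def interleave : List ℕ → List ℕ → List ℕ
  | [], ys => ys
  | x :: xs, ys => x :: interleave ys xs
termination_by xs ys => xs.length + ys.length
decreasing_by simp [Nat.add_comm]; omega

open Matrix

section OffDiagonal

variable {R : Type*} [CommSemiring R]

lemma offDiag_mulVec (x y : R) (v : Fin 2 → R) : !![0, x; y, 0] *ᵥ v = ![x * v 1, y * v 0] := by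
  ext i
  fin_cases i <;> simp [vecHead, vecTail]

theorem prod_interleave_offDiag_mulVec_one (a b : ℕ → R) (xs ys : List ℕ)
    (h₁ : ys.length ≤ xs.length) (h₂ : xs.length ≤ ys.length + 1) :
    ((interleave xs ys).map fun i => !![0, a i; b i, 0]).prod *ᵥ 1 =
      ![(xs.map a).prod * (ys.map b).prod, (ys.map a).prod * (xs.map b).prod] := by
  induction xs, ys using interleave.induct with
  | case1 ys =>
    obtain rfl : ys = [] := List.eq_nil_of_length_eq_zero (by simpa using h₁)
    ext i
    fin_cases i <;> simp [interleave]
  | case2 x xs ys ih =>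
    simp only [List.length_cons] at h₁ h₂
    rw [interleave, List.map_cons, List.prod_cons, ← mulVec_mulVec, ih (by omega) (by omega),
      offDiag_mulVec]
    ext i
    fin_cases i <;> simp [mul_assoc, mul_left_comm]

end OffDiagonal

namespace Multiset

variable {α β : Type*}

theorem count_inl_disjSum [DecidableEq α] [DecidableEq β] (s : Multiset α) (t : Multiset β)
    (a : α) : (s.disjSum t).count (.inl a) = s.count a := by
  simp [disjSum, count_map_eq_count' _ _ Sum.inl_injective]

theorem count_inr_disjSum [DecidableEq α] [DecidableEq β] (s : Multiset α) (t : Multiset β)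
    (b : β) : (s.disjSum t).count (.inr b) = t.count b := by
  simp [disjSum, count_map_eq_count' _ _ Sum.inr_injective]

theorem disjSum_injective2 : Function.Injective2 (@disjSum α β) := by
  classical
  intro s s' t t' h
  constructor
  · ext a
    rw [← count_inl_disjSum s t, h, count_inl_disjSum]
  · ext b
    rw [← count_inr_disjSum s t, h, count_inr_disjSum]

end Multiset

theorem List.eq_of_coe_disjSum_eq {α β : Type*} [PartialOrder α] [PartialOrder β]
    {xs xs' : List α} {ys ys' : List β} (hxs : xs.Pairwise (· ≤ ·)) (hxs' : xs'.Pairwise (· ≤ ·))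
    (hys : ys.Pairwise (· ≤ ·)) (hys' : ys'.Pairwise (· ≤ ·))
    (h : (xs : Multiset α).disjSum (ys : Multiset β) =
      (xs' : Multiset α).disjSum (ys' : Multiset β)) :
    xs = xs' ∧ ys = ys' := by
  obtain ⟨hx, hy⟩ := Multiset.disjSum_injective2 h
  exact ⟨(Multiset.coe_eq_coe.mp hx).eq_of_pairwise' hxs hxs',
    (Multiset.coe_eq_coe.mp hy).eq_of_pairwise' hys hys'⟩

namespace MvPolynomial

variable {σ τ R : Type*} [CommSemiring R]

theorem prod_map_X [DecidableEq σ] (l : List σ) :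
    (l.map X).prod = monomial (Multiset.toFinsupp (l : Multiset σ)) (1 : R) := by
  induction l with
  | nil => simp
  | cons s l ih =>
    rw [List.map_cons, List.prod_cons, ih, X, monomial_mul, one_mul, ← Multiset.cons_coe,
      ← Multiset.singleton_add, Multiset.toFinsupp_add, Multiset.toFinsupp_singleton]

theorem prod_map_X_inl_mul_prod_map_X_inr [DecidableEq σ] [DecidableEq τ] (xs : List σ)
    (ys : List τ) :
    (xs.map fun i => X (.inl i)).prod * (ys.map fun j => X (.inr j)).prod =
      (monomial (Multiset.toFinsupp ((xs : Multiset σ).disjSum (ys : Multiset τ))) 1 :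
        MvPolynomial (σ ⊕ τ) R) := by
  rw [Multiset.disjSum, Multiset.map_coe, Multiset.map_coe, Multiset.coe_add, ← prod_map_X,
    List.map_append, List.prod_append, List.map_map, List.map_map]
  rfl

end MvPolynomial

theorem generic_offdiag_linear_independent_general (D : Type*) [CommRing D] :
    let A := MvPolynomial (ℕ ⊕ ℕ) D
    let β : ℕ → A := fun i => X (Sum.inl i)
    let γ : ℕ → A := fun i => X (Sum.inr i)
    let Z : ℕ → Matrix (Fin 2) (Fin 2) A := fun i => !![0, β i; γ i, 0]
    LinearIndependent D
      (fun p : {p : List ℕ × List ℕ //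
          p.1.Pairwise (· ≤ ·) ∧ p.2.Pairwise (· ≤ ·) ∧
          (p.1.length = p.2.length ∨ p.1.length = p.2.length + 1)} =>
        (((interleave p.1.1 p.1.2).map Z).prod : Matrix (Fin 2) (Fin 2) A)) := by
  intro A β γ Z
  set ι := {p : List ℕ × List ℕ // p.1.Pairwise (· ≤ ·) ∧ p.2.Pairwise (· ≤ ·) ∧
    (p.1.length = p.2.length ∨ p.1.length = p.2.length + 1)}
  let exponent (p : ι) : ℕ ⊕ ℕ →₀ ℕ :=
    Multiset.toFinsupp ((p.1.1 : Multiset ℕ).disjSum (p.1.2 : Multiset ℕ))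
  have exponent_injective : Function.Injective exponent := by
    intro ⟨⟨xs, ys⟩, hxs, hys, _⟩ ⟨⟨xs', ys'⟩, hxs', hys', _⟩ h
    obtain ⟨rfl, rfl⟩ :=
      List.eq_of_coe_disjSum_eq hxs hxs' hys hys' (Multiset.toFinsupp.injective h)
    rfl
  let topRowSum : Matrix (Fin 2) (Fin 2) A →ₗ[D] A :=
    LinearMap.proj 0 ∘ₗ (mulVecBilin D D).flip 1
  have top_entry : (topRowSum ∘ fun p : ι => ((interleave p.1.1 p.1.2).map Z).prod) =
      basisMonomials (ℕ ⊕ ℕ) D ∘ exponent := by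
    funext ⟨⟨xs, ys⟩, _, _, hlen⟩
    simp only [Function.comp_apply, topRowSum, LinearMap.coe_comp, LinearMap.flip_apply,
      mulVecBilin_apply, LinearMap.coe_proj, Function.eval, coe_basisMonomials]
    dsimp only at hlen
    rw [prod_interleave_offDiag_mulVec_one _ _ _ _ (by omega) (by omega), cons_val_zero]
    exact prod_map_X_inl_mul_prod_map_X_inr xs ys
  refine LinearIndependent.of_comp topRowSum ?_
  rw [top_entry]
  exact (basisMonomials (ℕ ⊕ ℕ) D).linearIndependent.comp _ exponent_injective

theorem generic_offdiag_linear_independent (D : Type*) [CommRing D] [IsDomain D] :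
    let A := MvPolynomial (ℕ ⊕ ℕ) D
    let β : ℕ → A := fun i => X (Sum.inl i)
    let γ : ℕ → A := fun i => X (Sum.inr i)
    let Z : ℕ → Matrix (Fin 2) (Fin 2) A := fun i => !![0, β i; γ i, 0]
    LinearIndependent D
      (fun p : {p : List ℕ × List ℕ //
          p.1.Pairwise (· ≤ ·) ∧ p.2.Pairwise (· ≤ ·) ∧
          (p.1.length = p.2.length ∨ p.1.length = p.2.length + 1)} =>
        (((interleave p.1.1 p.1.2).map Z).prod : Matrix (Fin 2) (Fin 2) A)) :=
  generic_offdiag_linear_independent_general D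
end

section
/- (Higman's lemma, finite sequence version) If (A, ≤) is a partially well ordered set, then the set V(A) of finite sequences over A, ordered by u ≤_s v iff v has a subsequence that majorizes u element-wise, is partially well ordered. -/
theorem WellQuasiOrdered.sublistForall₂ {α : Type*} {r : α → α → Prop} [IsPreorder α r]
    (hr : WellQuasiOrdered r) : WellQuasiOrdered (List.SublistForall₂ r) := by
  have hlists := (Set.partiallyWellOrderedOn_univ_iff.mpr hr).partiallyWellOrderedOn_sublistForall₂ r
  rw [show {l : List α | ∀ x ∈ l, x ∈ Set.univ} = Set.univ by simp] at hlists
  exact Set.partiallyWellOrderedOn_univ_iff.mp hlists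

theorem higman_lemma_lists {A : Type*} [PartialOrder A]
    (hA : ∀ a : ℕ → A, ∃ i j : ℕ, i < j ∧ a i ≤ a j) :
    ∀ f : ℕ → List A, ∃ i j : ℕ, i < j ∧
      ∃ w : List A, List.Forall₂ (· ≤ ·) (f i) w ∧ w.Sublist (f j) := by
  intro f
  obtain ⟨i, j, hij, hsub⟩ := WellQuasiOrdered.sublistForall₂ (r := (· ≤ ·)) hA f
  exact ⟨i, j, hij, List.sublistForall₂_iff.mp hsub⟩
end

section
/- Let D be a Noetherian commutative ring and M a D-module with a basis B that is linearly well-ordered by ≤ and partially well-ordered by a second order ≤', and suppose a monoid S acts on M by D-linear maps such that: for all f with leading monomial m and any m' ∈ B with m ≤' m', there is s ∈ S with the leading monomial of s·f equal to m' and the same leading coefficient. Then every S-invariant ascending chain of S-invariant submodules of M stabilizes; in particular there is no strictly increasing infinite chain of S-invariant submodules. -/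
/-! For a submodule `V` and `m ∈ B`, let `I_V(m)` be the ideal of coefficients at `m` of the
elements of `V` supported on `{i ≤ m}`. Since `≤` is a well-order, `V ≤ W` together with
`I_W ≤ I_V` forces `W = V`: an element of `W \ V` of least leading monomial could have its
leading term cancelled by an element of `V`. For `S`-invariant `V` the hypothesis on `S` makes
`m ↦ I_V(m)` monotone for `≤'`, so an ascending chain of invariant submodules yields an ascending
chain of `≤'`-monotone maps `B → Ideal D`. Such chains stabilize: along a `≤'`-monotone
subsequence of the monomials where consecutive maps differ, a strict chain of maps would give a
strict chain of ideals of the Noetherian ring `D`. -/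

instance OrderHom.wellFoundedGT {α β : Type*} [Preorder α] [WellQuasiOrderedLE α] [Preorder β]
    [WellFoundedGT β] : WellFoundedGT (α →o β) := by
  refine ⟨RelEmbedding.wellFounded_iff_isEmpty.2 ⟨fun F => ?_⟩⟩
  have hF : StrictMono F := fun _ _ h => F.map_rel_iff.2 h
  have hjump : ∀ n, ∃ x, F n x < F (n + 1) x := fun n => by
    obtain ⟨hle, hnot⟩ := lt_iff_le_not_ge.1 (hF n.lt_succ_self)
    obtain ⟨x, hx⟩ := not_forall.1 (mt OrderHom.le_def.2 hnot)
    exact ⟨x, lt_of_le_not_ge (hle x) hx⟩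
  choose x hx using hjump
  obtain ⟨g, hg⟩ := wellQuasiOrdered_le.exists_monotone_subseq x
  refine not_strictMono_of_wellFoundedGT (fun k => F (g k) (x (g k)))
    (strictMono_nat_of_lt_succ fun k => ?_)
  calc F (g k) (x (g k)) < F (g k + 1) (x (g k)) := hx _
    _ ≤ F (g (k + 1)) (x (g k)) := hF.monotone (g.strictMono k.lt_succ_self) _
    _ ≤ F (g (k + 1)) (x (g (k + 1))) := (F _).mono (hg _ _ k.le_succ)

namespace Module.Basis

variable {ι D M : Type*} [CommRing D] [AddCommGroup M] [Module D M] (b : Basis ι D M)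
  (le : ι → ι → Prop)

noncomputable def degreeLE (m : ι) : Submodule D M :=
  (Finsupp.supported D D {i | le i m}).comap (b.repr : M →ₗ[D] ι →₀ D)

variable {b le} in
lemma mem_degreeLE {m : ι} {f : M} : f ∈ b.degreeLE le m ↔ ∀ i ∈ (b.repr f).support, le i m := by
  simp [degreeLE, Finsupp.mem_supported, Set.subset_def]

noncomputable def leadingCoeffIdeal (V : Submodule D M) (m : ι) : Ideal D :=
  (V ⊓ b.degreeLE le m).map (Finsupp.lapply m ∘ₗ (b.repr : M →ₗ[D] ι →₀ D))

variable {b le} in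
lemma mem_leadingCoeffIdeal {V : Submodule D M} {m : ι} {c : D} :
    c ∈ b.leadingCoeffIdeal le V m ↔ ∃ f ∈ V, f ∈ b.degreeLE le m ∧ b.repr f m = c := by
  simp [leadingCoeffIdeal, and_assoc]

lemma leadingCoeffIdeal_mono {V W : Submodule D M} (h : V ≤ W) (m : ι) :
    b.leadingCoeffIdeal le V m ≤ b.leadingCoeffIdeal le W m :=
  Submodule.map_mono (inf_le_inf_right _ h)

variable {b le} {lm : M → ι}

lemma lm_eq_of_mem_degreeLE (hle_antisymm : ∀ i j, le i j → le j i → i = j)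
    (hlm : ∀ f : M, f ≠ 0 →
      lm f ∈ (b.repr f).support ∧ ∀ i ∈ (b.repr f).support, le i (lm f))
    {f : M} {m : ι} (hf : f ∈ b.degreeLE le m) (hfm : b.repr f m ≠ 0) : lm f = m := by
  have hf0 : f ≠ 0 := by rintro rfl; simp at hfm
  exact hle_antisymm _ _ (mem_degreeLE.1 hf _ (hlm f hf0).1)
    ((hlm f hf0).2 m (Finsupp.mem_support_iff.2 hfm))

lemma leadingCoeffIdeal_le_of_le' (hle_antisymm : ∀ i j, le i j → le j i → i = j)
    (hlm : ∀ f : M, f ≠ 0 →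
      lm f ∈ (b.repr f).support ∧ ∀ i ∈ (b.repr f).support, le i (lm f))
    {lc : M → D} (hlc : ∀ f : M, f ≠ 0 → lc f = b.repr f (lm f))
    {le' : ι → ι → Prop} {S : Set (Module.End D M)}
    (hS : ∀ f : M, f ≠ 0 → ∀ m' : ι, le' (lm f) m' →
      ∃ s ∈ S, s f ≠ 0 ∧ lm (s f) = m' ∧ lc (s f) = lc f)
    {V : Submodule D M} (hV : ∀ s ∈ S, ∀ x ∈ V, s x ∈ V) {m m' : ι} (hmm' : le' m m') :
    b.leadingCoeffIdeal le V m ≤ b.leadingCoeffIdeal le V m' := by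
  intro c hc
  obtain ⟨f, hfV, hfm, rfl⟩ := mem_leadingCoeffIdeal.1 hc
  by_cases hc0 : b.repr f m = 0
  · rw [hc0]; exact Submodule.zero_mem _
  have hlmf := lm_eq_of_mem_degreeLE hle_antisymm hlm hfm hc0
  have hf0 : f ≠ 0 := by rintro rfl; simp at hc0
  obtain ⟨s, hs, hsf0, hlms, hlcs⟩ := hS f hf0 m' (hlmf ▸ hmm')
  refine mem_leadingCoeffIdeal.2 ⟨s f, hV s hs f hfV, mem_degreeLE.2 (hlms ▸ (hlm _ hsf0).2), ?_⟩
  rw [← hlms, ← hlc _ hsf0, hlcs, hlc f hf0, hlmf]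

lemma le_of_leadingCoeffIdeal_le (hle_antisymm : ∀ i j, le i j → le j i → i = j)
    (hle_wo : ∀ S : Set ι, S.Nonempty → ∃ m ∈ S, ∀ i ∈ S, le m i)
    (hlm : ∀ f : M, f ≠ 0 →
      lm f ∈ (b.repr f).support ∧ ∀ i ∈ (b.repr f).support, le i (lm f))
    {V W : Submodule D M} (hVW : V ≤ W)
    (hI : ∀ m, b.leadingCoeffIdeal le W m ≤ b.leadingCoeffIdeal le V m) : W ≤ V := by
  by_contra hWV
  obtain ⟨w₀, hw₀W, hw₀V⟩ := SetLike.not_le_iff_exists.1 hWV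
  obtain ⟨m, ⟨w, hwW, hwV, rfl⟩, hmin⟩ :=
    hle_wo {i | ∃ w ∈ W, w ∉ V ∧ lm w = i} ⟨lm w₀, w₀, hw₀W, hw₀V, rfl⟩
  have hw0 : w ≠ 0 := by rintro rfl; exact hwV V.zero_mem
  have hwdeg : w ∈ b.degreeLE le (lm w) := mem_degreeLE.2 (hlm w hw0).2
  obtain ⟨f, hfV, hfdeg, hfw⟩ :=
    mem_leadingCoeffIdeal.1 (hI _ (mem_leadingCoeffIdeal.2 ⟨w, hwW, hwdeg, rfl⟩))
  -- `w - f` lies in `W \ V` and cancels the leading term of `w`, contradicting minimality.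
  have hdV : w - f ∉ V := fun h => hwV (by simpa using V.add_mem h hfV)
  have hd0 : w - f ≠ 0 := by rintro h; exact hdV (h ▸ V.zero_mem)
  have hlmd : lm (w - f) = lm w := by
    refine hle_antisymm _ _ ?_ (hmin _ ⟨w - f, W.sub_mem hwW (hVW hfV), hdV, rfl⟩)
    exact mem_degreeLE.1 (Submodule.sub_mem _ hwdeg hfdeg) _ (hlm _ hd0).1
  have := (hlm _ hd0).1
  rw [hlmd, Finsupp.mem_support_iff, map_sub, Finsupp.sub_apply, hfw, sub_self] at this
  exact this rfl

end Module.Basis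

theorem specht_abstract_general
    (D : Type*) [CommRing D] [IsNoetherianRing D]
    (M : Type*) [AddCommGroup M] [Module D M]
    (ι : Type*) (b : Module.Basis ι D M)
    (le le' : ι → ι → Prop)
    -- (ι, le) is a linear well-order
    (hle_antisymm : ∀ i j, le i j → le j i → i = j)
    (hle_wo : ∀ S : Set ι, S.Nonempty → ∃ m ∈ S, ∀ i ∈ S, le m i)
    -- (ι, le') is a partial well-order
    (hle'_refl : ∀ i, le' i i)
    (hle'_trans : ∀ i j k, le' i j → le' j k → le' i k)
    (hle'_pwo : ∀ a : ℕ → ι, ∃ i j : ℕ, i < j ∧ le' (a i) (a j))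
    -- leading monomial and leading coefficient with respect to le
    (lm : M → ι) (lc : M → D)
    (hlm : ∀ f : M, f ≠ 0 →
      lm f ∈ (b.repr f).support ∧ ∀ i ∈ (b.repr f).support, le i (lm f))
    (hlc : ∀ f : M, f ≠ 0 → lc f = b.repr f (lm f))
    -- the acting monoid of D-linear maps
    (S : Submonoid (Module.End D M))
    -- realizability of le'-larger leading monomials by the action of S
    (hS : ∀ f : M, f ≠ 0 → ∀ m' : ι, le' (lm f) m' →
      ∃ s ∈ S, s f ≠ 0 ∧ lm (s f) = m' ∧ lc (s f) = lc f) :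
    ∀ N : ℕ → Submodule D M,
      Monotone N →
      (∀ n, ∀ s ∈ S, ∀ x ∈ N n, s x ∈ N n) →
      ∃ k : ℕ, ∀ n ≥ k, N n = N k := by
  intro N hN hinv
  let _ : Preorder ι := { le := le', le_refl := hle'_refl, le_trans := hle'_trans }
  have : WellQuasiOrderedLE ι := ⟨hle'_pwo⟩
  let I : ℕ →o (ι →o Ideal D) :=
    { toFun := fun n => ⟨b.leadingCoeffIdeal le (N n),
        fun _ _ h => b.leadingCoeffIdeal_le_of_le' hle_antisymm hlm hlc hS (hinv n) h⟩
      monotone' := fun _ _ h => b.leadingCoeffIdeal_mono le (hN h) }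
  obtain ⟨k, hk⟩ := WellFoundedGT.monotone_chain_condition I
  refine ⟨k, fun n hn => le_antisymm ?_ (hN hn)⟩
  exact b.le_of_leadingCoeffIdeal_le hle_antisymm hle_wo hlm (hN hn)
    fun m => (DFunLike.congr_fun (hk n hn) m).ge

theorem specht_abstract
    (D : Type*) [CommRing D] [IsNoetherianRing D]
    (M : Type*) [AddCommGroup M] [Module D M]
    (ι : Type*) (b : Module.Basis ι D M)
    (le le' : ι → ι → Prop)
    -- (ι, le) is a linear well-order
    (hle_total : ∀ i j, le i j ∨ le j i)
    (hle_antisymm : ∀ i j, le i j → le j i → i = j)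
    (hle_trans : ∀ i j k, le i j → le j k → le i k)
    (hle_wo : ∀ S : Set ι, S.Nonempty → ∃ m ∈ S, ∀ i ∈ S, le m i)
    -- (ι, le') is a partial well-order
    (hle'_refl : ∀ i, le' i i)
    (hle'_antisymm : ∀ i j, le' i j → le' j i → i = j)
    (hle'_trans : ∀ i j k, le' i j → le' j k → le' i k)
    (hle'_pwo : ∀ a : ℕ → ι, ∃ i j : ℕ, i < j ∧ le' (a i) (a j))
    -- leading monomial and leading coefficient with respect to le
    (lm : M → ι) (lc : M → D)
    (hlm : ∀ f : M, f ≠ 0 →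
      lm f ∈ (b.repr f).support ∧ ∀ i ∈ (b.repr f).support, le i (lm f))
    (hlc : ∀ f : M, f ≠ 0 → lc f = b.repr f (lm f))
    -- the acting monoid of D-linear maps
    (S : Submonoid (Module.End D M))
    -- realizability of le'-larger leading monomials by the action of S
    (hS : ∀ f : M, f ≠ 0 → ∀ m' : ι, le' (lm f) m' →
      ∃ s ∈ S, s f ≠ 0 ∧ lm (s f) = m' ∧ lc (s f) = lc f) :
    ∀ N : ℕ → Submodule D M,
      Monotone N →
      (∀ n, ∀ s ∈ S, ∀ x ∈ N n, s x ∈ N n) →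
      ∃ k : ℕ, ∀ n ≥ k, N n = N k :=
  specht_abstract_general D M ι b le le' hle_antisymm hle_wo hle'_refl hle'_trans hle'_pwo lm lc hlm
    hlc S hS
end
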